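/- arXiv:2006.07085 — 6 statements merged into one kernel-verified Lean document; each statement's English description precedes it below -/
import Mathlib

section
/- Let a₁₁, a₁₂, b₂₁, b₂₂ ∈ ℝ be such that at least one of them is positive and at least one is negative, and suppose σ_# := 2a₁₁ + a₁₂ + b₂₁ + 2b₂₂ ≠ 0. Then there exist positive reals ã₁₁, ã₁₂, b̃₂₁, b̃₂₂ > 0 such that (3ã₁₁a₁₁ + ã₁₂a₁₂ + b̃₂₁b₂₁ + 3b̃₂₂b₂₂)·σ_# < 0. Consequently, for any coefficients with a sign change, one can choose symmetric smooth convex approximations of the absolute value (with quadratic terms having coefficients proportional to ã₁₁, ã₁₂, b̃₂₁, b̃₂₂) such that the first Lyapunov coefficient of the smoothened planar Hopf bifurcation has sign opposite to that of the non-smooth one, i.e., the criticality of the smoothened bifurcation is opposite to the criticality of the non-smooth case. -/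
/-!
Both Lyapunov coefficients are positive combinations of the same four coefficients, only with
different weights. A coefficient whose sign is opposite to that of `σ_#` can be given a weight
large enough to dominate the other three, which forces the smoothened coefficient to have that sign.
-/

open Matrix

section PositiveWeights

variable {ι : Type*} [Fintype ι] [DecidableEq ι] {x : ι → ℝ}

theorem exists_pos_weights_dotProduct_pos {j : ι} (hj : 0 < x j) :
    ∃ w : ι → ℝ, (∀ i, 0 < w i) ∧ 0 < w ⬝ᵥ x := by
  set T := (|1 ⬝ᵥ x| + 1) / x j
  have hT : 0 < T := by positivity
  refine ⟨1 + T • Pi.single j 1, fun i => ?_, ?_⟩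
  · have : 0 ≤ (Pi.single j 1 : ι → ℝ) i := by
      rcases eq_or_ne i j with rfl | h <;> simp [*]
    simpa using add_pos_of_pos_of_nonneg one_pos (mul_nonneg hT.le this)
  · have hTx : T * x j = |1 ⬝ᵥ x| + 1 := div_mul_cancel₀ _ hj.ne'
    rw [add_dotProduct, smul_dotProduct, single_one_dotProduct, smul_eq_mul, hTx]
    linarith [neg_abs_le (1 ⬝ᵥ x)]

theorem exists_pos_weights_dotProduct_neg {j : ι} (hj : x j < 0) :
    ∃ w : ι → ℝ, (∀ i, 0 < w i) ∧ w ⬝ᵥ x < 0 := by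
  obtain ⟨w, hw, hwx⟩ := exists_pos_weights_dotProduct_pos (x := -x) (j := j) (by simpa)
  exact ⟨w, hw, by simpa using hwx⟩

theorem exists_pos_weights_dotProduct_mul_neg {s : ℝ} (hpos : ∃ j, 0 < x j)
    (hneg : ∃ j, x j < 0) (hs : s ≠ 0) :
    ∃ w : ι → ℝ, (∀ i, 0 < w i) ∧ (w ⬝ᵥ x) * s < 0 := by
  rcases hs.lt_or_gt with hs | hs
  · obtain ⟨j, hj⟩ := hpos
    obtain ⟨w, hw, hwx⟩ := exists_pos_weights_dotProduct_pos hj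
    exact ⟨w, hw, mul_neg_of_pos_of_neg hwx hs⟩
  · obtain ⟨j, hj⟩ := hneg
    obtain ⟨w, hw, hwx⟩ := exists_pos_weights_dotProduct_neg hj
    exact ⟨w, hw, mul_neg_of_neg_of_pos hwx hs⟩

end PositiveWeights

/-- If among `a₁₁, a₁₂, b₂₁, b₂₂` at least one is positive and at least one
is negative, and the non-smooth first Lyapunov coefficient
`σ_# = 2a₁₁ + a₁₂ + b₂₁ + 2b₂₂` is nonzero, then there exist positive weights
`ã₁₁, ã₁₂, b̃₂₁, b̃₂₂ > 0` such that the smoothened first Lyapunov coefficient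
`3ã₁₁a₁₁ + ã₁₂a₁₂ + b̃₂₁b₂₁ + 3b̃₂₂b₂₂` has sign opposite to `σ_#`. -/
theorem stmt10 (a11 a12 b21 b22 : ℝ)
    (hpos : 0 < a11 ∨ 0 < a12 ∨ 0 < b21 ∨ 0 < b22)
    (hneg : a11 < 0 ∨ a12 < 0 ∨ b21 < 0 ∨ b22 < 0)
    (hσ : 2 * a11 + a12 + b21 + 2 * b22 ≠ 0) :
    ∃ ta11 ta12 tb21 tb22 : ℝ, 0 < ta11 ∧ 0 < ta12 ∧ 0 < tb21 ∧ 0 < tb22 ∧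
      (3 * ta11 * a11 + ta12 * a12 + tb21 * b21 + 3 * tb22 * b22) *
        (2 * a11 + a12 + b21 + 2 * b22) < 0 := by
  obtain ⟨w, hw, hwx⟩ := exists_pos_weights_dotProduct_mul_neg (x := ![a11, a12, b21, b22])
    (by simpa [Fin.exists_fin_succ] using hpos) (by simpa [Fin.exists_fin_succ] using hneg) hσ
  refine ⟨w 0 / 3, w 1, w 2, w 3 / 3, by linarith [hw 0], hw 1, hw 2, by linarith [hw 3], ?_⟩
  convert hwx using 2
  simp only [dotProduct, Fin.sum_univ_four, cons_val_zero, cons_val_one, cons_val]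
  ring
end

section
/- For all real coefficients a_{ij}, b_{ij} (1 ≤ i,j ≤ 2) and a₁, a₂, a₃, b₁, b₂, b₃, define χ₂ : ℝ → ℝ by χ₂(φ) = cosφ|cosφ|(a₁₁cosφ + b₁₁sinφ) + cosφ|sinφ|(a₁₂cosφ + b₁₂sinφ) + sinφ|cosφ|(a₂₁cosφ + b₂₁sinφ) + sinφ|sinφ|(a₂₂cosφ + b₂₂sinφ) + (a₁ − b₂ − a₃)cos³φ + (b₁ + a₂ − b₃)sinφ·cos²φ + (b₂ + a₃)cosφ + b₃sinφ. Then ∫₀^{2π} χ₂(φ) dφ = (4/3)·(2a₁₁ + a₁₂ + b₂₁ + 2b₂₂) = (4/3)·σ_#. In particular the smooth quadratic contributions (the terms with a₁, a₂, a₃, b₁, b₂, b₃) integrate to zero, and the average of the quadratic coefficient in the averaged radial normal form equals (2/(3π))·σ_#. -/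
/-!
Each term of `χ₂` is even or odd under each of the reflections `sin ↦ -sin` (`φ ↦ 2π - φ`) and
`cos ↦ -cos` (`φ ↦ π - φ`). Folding `[0, 2π]` onto `[0, π/2]` along both reflections kills every
term that is odd under one of them, in particular all the smooth ones, and leaves four times
`a₁₁ cos³ + a₁₂ sin cos² + b₂₁ sin² cos + b₂₂ sin³` (the absolute values drop on `[0, π/2]`),
whose integrals over the quarter period are `2/3, 1/3, 1/3, 2/3` times the coefficients.
-/

open Real intervalIntegral

theorem integral_zero_two_mul_eq_integral_add_reflect {f : ℝ → ℝ} (hf : Continuous f) (a : ℝ) :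
    ∫ x in 0..2 * a, f x = ∫ x in 0..a, (f x + f (2 * a - x)) := by
  have hf' : Continuous fun x => f (2 * a - x) := hf.comp (by fun_prop)
  rw [integral_add (hf.intervalIntegrable _ _) (hf'.intervalIntegrable _ _),
    integral_comp_sub_left f, sub_zero, show 2 * a - a = a by ring,
    integral_add_adjacent_intervals (hf.intervalIntegrable _ _) (hf.intervalIntegrable _ _)]

theorem integral_zero_two_pi_eq_integral_quarter {f : ℝ → ℝ} (hf : Continuous f) :
    ∫ x in 0..2 * π, f x =
      ∫ x in 0..π / 2, (f x + f (2 * π - x) + (f (π - x) + f (π + x))) := by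
  have hg : Continuous fun x => f x + f (2 * π - x) := by fun_prop
  have h := integral_zero_two_mul_eq_integral_add_reflect hg (π / 2)
  rw [mul_div_cancel₀ π two_ne_zero] at h
  rw [integral_zero_two_mul_eq_integral_add_reflect hf, h]
  congr 1
  funext x
  rw [show 2 * π - (π - x) = π + x by ring]

theorem integral_cubic_trig_zero_pi_div_two (p q r s : ℝ) :
    ∫ x in 0..π / 2, (p * cos x ^ 3 + q * (sin x * cos x ^ 2) + r * (sin x ^ 2 * cos x) +
      s * sin x ^ 3) = (2 * p + q + r + 2 * s) / 3 := by
  have hi : ∀ g : ℝ → ℝ, Continuous g → IntervalIntegrable g MeasureTheory.volume 0 (π / 2) :=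
    fun g hg => hg.intervalIntegrable _ _
  rw [integral_add (hi _ (by fun_prop)) (hi _ (by fun_prop)),
    integral_add (hi _ (by fun_prop)) (hi _ (by fun_prop)),
    integral_add (hi _ (by fun_prop)) (hi _ (by fun_prop))]
  simp only [integral_const_mul, integral_cos_pow_three, integral_sin_mul_cos_sq,
    integral_sin_sq_mul_cos, integral_sin_pow_three, sin_pi_div_two, cos_pi_div_two, sin_zero,
    cos_zero]
  ring

noncomputable def chi2 (a11 a12 a21 a22 b11 b12 b21 b22 a1 a2 a3 b1 b2 b3 φ : ℝ) : ℝ :=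
  cos φ * |cos φ| * (a11 * cos φ + b11 * sin φ) +
    cos φ * |sin φ| * (a12 * cos φ + b12 * sin φ) +
    sin φ * |cos φ| * (a21 * cos φ + b21 * sin φ) +
    sin φ * |sin φ| * (a22 * cos φ + b22 * sin φ) +
    (a1 - b2 - a3) * cos φ ^ 3 + (b1 + a2 - b3) * sin φ * cos φ ^ 2 +
    (b2 + a3) * cos φ + b3 * sin φ

section

variable {a11 a12 a21 a22 b11 b12 b21 b22 a1 a2 a3 b1 b2 b3 : ℝ}

local notation "χ" => chi2 a11 a12 a21 a22 b11 b12 b21 b22 a1 a2 a3 b1 b2 b3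

theorem continuous_chi2 : Continuous χ := by
  unfold chi2
  fun_prop

theorem chi2_fold_of_nonneg {x : ℝ} (hc : 0 ≤ cos x) (hs : 0 ≤ sin x) :
    χ x + χ (2 * π - x) + (χ (π - x) + χ (π + x)) =
      4 * (a11 * cos x ^ 3 + a12 * (sin x * cos x ^ 2) + b21 * (sin x ^ 2 * cos x) +
        b22 * sin x ^ 3) := by
  simp only [chi2, cos_two_pi_sub, sin_two_pi_sub, cos_pi_sub, sin_pi_sub, add_comm π x,
    cos_add_pi, sin_add_pi, abs_neg, abs_of_nonneg hc, abs_of_nonneg hs]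
  ring

end

/-- The angular average of the quadratic radial coefficient `χ₂` of the planar
system (including both the second-order modulus terms with coefficients `a_{ij}, b_{ij}`
and the smooth quadratic terms with coefficients `a₁,a₂,a₃,b₁,b₂,b₃`) satisfies
`∫₀^{2π} χ₂ = (4/3)·σ_#` with `σ_# = 2a₁₁ + a₁₂ + b₂₁ + 2b₂₂`; in particular the smooth
quadratic contributions integrate to zero. -/
theorem stmt12 (a11 a12 a21 a22 b11 b12 b21 b22 a1 a2 a3 b1 b2 b3 : ℝ) :
    (∫ φ in (0:ℝ)..(2 * π),
      (cos φ * |cos φ| * (a11 * cos φ + b11 * sin φ) +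
       cos φ * |sin φ| * (a12 * cos φ + b12 * sin φ) +
       sin φ * |cos φ| * (a21 * cos φ + b21 * sin φ) +
       sin φ * |sin φ| * (a22 * cos φ + b22 * sin φ) +
       (a1 - b2 - a3) * cos φ ^ 3 + (b1 + a2 - b3) * sin φ * cos φ ^ 2 +
       (b2 + a3) * cos φ + b3 * sin φ))
    = 4 / 3 * (2 * a11 + a12 + b21 + 2 * b22) := by
  calc ∫ φ in 0..2 * π, chi2 a11 a12 a21 a22 b11 b12 b21 b22 a1 a2 a3 b1 b2 b3 φ
      = ∫ x in 0..π / 2, 4 * (a11 * cos x ^ 3 + a12 * (sin x * cos x ^ 2) +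
          b21 * (sin x ^ 2 * cos x) + b22 * sin x ^ 3) := by
        rw [integral_zero_two_pi_eq_integral_quarter continuous_chi2]
        refine integral_congr fun x hx => ?_
        rw [Set.uIcc_of_le (by positivity)] at hx
        exact chi2_fold_of_nonneg (cos_nonneg_of_mem_Icc ⟨by linarith [hx.1, pi_pos], hx.2⟩)
          (sin_nonneg_of_nonneg_of_le_pi hx.1 (by linarith [hx.2, pi_pos]))
    _ = 4 / 3 * (2 * a11 + a12 + b21 + 2 * b22) := by
        rw [integral_const_mul, integral_cubic_trig_zero_pi_div_two]
        ring
end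

section
/- For p₋, p₊ ∈ ℝ let [x]_{p₋}^{p₊} := p₊x for x ≥ 0 and p₋x for x < 0. For all real coefficients a_{ij}, b_{ij} (1 ≤ i,j ≤ 2) and slope pairs α_k = (α_{k−}, α_{k+}), β_k = (β_{k−}, β_{k+}) (k = 1,2,3,4), define χ₂ : ℝ → ℝ by χ₂(φ) = cos²φ·(a₁₁[cosφ]_{α₁₋}^{α₁₊} + a₁₂[sinφ]_{α₂₋}^{α₂₊}) + sin²φ·(b₂₁[cosφ]_{β₃₋}^{β₃₊} + b₂₂[sinφ]_{β₄₋}^{β₄₊}) + sinφ·cosφ·(a₂₁[cosφ]_{α₃₋}^{α₃₊} + a₂₂[sinφ]_{α₄₋}^{α₄₊} + b₁₁[cosφ]_{β₁₋}^{β₁₊} + b₁₂[sinφ]_{β₂₋}^{β₂₊}). Then ∫₀^{2π} χ₂(φ) dφ = (4/3)·[a₁₁(α₁₊ − α₁₋) + (1/2)a₁₂(α₂₊ − α₂₋) + (1/2)b₂₁(β₃₊ − β₃₋) + b₂₂(β₄₊ − β₄₋)] = (4/3)·σ̃_#. -/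
open Real

/-- The generalized absolute value `[x]_{p₋}^{p₊}`: slope `p₊` for `x ≥ 0`, slope `p₋` for `x < 0`. -/
noncomputable def genAbs (pm pp x : ℝ) : ℝ := if 0 ≤ x then pp * x else pm * x

lemma genAbs_of_nonneg (pm pp : ℝ) {x : ℝ} (h : 0 ≤ x) : genAbs pm pp x = pp * x :=
  if_pos h

lemma genAbs_of_nonpos (pm pp : ℝ) {x : ℝ} (h : x ≤ 0) : genAbs pm pp x = pm * x := by
  unfold genAbs
  split_ifs with h'
  · have hx : x = 0 := le_antisymm h h'
    simp [hx]
  · rfl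

lemma genAbs_eq (pm pp x : ℝ) : genAbs pm pp x = (pp + pm) / 2 * x + (pp - pm) / 2 * |x| := by
  unfold genAbs
  split_ifs with h
  · rw [abs_of_nonneg h]; ring
  · rw [abs_of_neg (lt_of_not_ge h)]; ring

lemma key (A B C D a b : ℝ) :
    (∫ x in a..b, (A * cos x ^ 3 + B * cos x ^ 2 * sin x + C * sin x ^ 2 * cos x + D * sin x ^ 3))
    = (A * (sin b - sin b ^ 3 / 3) - B * (cos b ^ 3 / 3) + C * (sin b ^ 3 / 3) + D * (cos b ^ 3 / 3 - cos b))
      - (A * (sin a - sin a ^ 3 / 3) - B * (cos a ^ 3 / 3) + C * (sin a ^ 3 / 3) + D * (cos a ^ 3 / 3 - cos a)) := by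
  apply intervalIntegral.integral_eq_sub_of_hasDerivAt
  · intro x hx
    have hs := Real.hasDerivAt_sin x
    have hc := Real.hasDerivAt_cos x
    have h :=
      ((((hs.sub ((hs.pow 3).div_const 3)).const_mul A).sub
        (((hc.pow 3).div_const 3).const_mul B)).add
        (((hs.pow 3).div_const 3).const_mul C)).add
        ((((hc.pow 3).div_const 3).sub hc).const_mul D)
    refine h.congr_deriv ?_
    push_cast
    linear_combination (-(A * cos x) - D * sin x) * sin_sq_add_cos_sq x
  · apply Continuous.intervalIntegrable
    continuity

/-- The angular average of the quadratic radial coefficient `χ₂` built from the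
generalized second-order modulus nonlinearities with slope pairs `α_k, β_k` satisfies
`∫₀^{2π} χ₂ = (4/3)·σ̃_#` with
`σ̃_# = a₁₁(α₁₊−α₁₋) + (1/2)a₁₂(α₂₊−α₂₋) + (1/2)b₂₁(β₃₊−β₃₋) + b₂₂(β₄₊−β₄₋)`. -/
theorem stmt15 (a11 a12 a21 a22 b11 b12 b21 b22 : ℝ)
    (α1m α1p α2m α2p α3m α3p α4m α4p β1m β1p β2m β2p β3m β3p β4m β4p : ℝ) :
    (∫ φ in (0:ℝ)..(2 * π),
      (cos φ ^ 2 * (a11 * genAbs α1m α1p (cos φ) + a12 * genAbs α2m α2p (sin φ)) +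
       sin φ ^ 2 * (b21 * genAbs β3m β3p (cos φ) + b22 * genAbs β4m β4p (sin φ)) +
       sin φ * cos φ * (a21 * genAbs α3m α3p (cos φ) + a22 * genAbs α4m α4p (sin φ) +
         b11 * genAbs β1m β1p (cos φ) + b12 * genAbs β2m β2p (sin φ))))
    = 4 / 3 * (a11 * (α1p - α1m) + 1 / 2 * a12 * (α2p - α2m)
        + 1 / 2 * b21 * (β3p - β3m) + b22 * (β4p - β4m)) := by
  have hpi := pi_pos
  have hcont : Continuous (fun φ : ℝ =>
      (cos φ ^ 2 * (a11 * genAbs α1m α1p (cos φ) + a12 * genAbs α2m α2p (sin φ)) +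
       sin φ ^ 2 * (b21 * genAbs β3m β3p (cos φ) + b22 * genAbs β4m β4p (sin φ)) +
       sin φ * cos φ * (a21 * genAbs α3m α3p (cos φ) + a22 * genAbs α4m α4p (sin φ) +
         b11 * genAbs β1m β1p (cos φ) + b12 * genAbs β2m β2p (sin φ)))) := by
    simp only [genAbs_eq]
    continuity
  have hInt : ∀ u v : ℝ, IntervalIntegrable (fun φ : ℝ =>
      (cos φ ^ 2 * (a11 * genAbs α1m α1p (cos φ) + a12 * genAbs α2m α2p (sin φ)) +
       sin φ ^ 2 * (b21 * genAbs β3m β3p (cos φ) + b22 * genAbs β4m β4p (sin φ)) +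
       sin φ * cos φ * (a21 * genAbs α3m α3p (cos φ) + a22 * genAbs α4m α4p (sin φ) +
         b11 * genAbs β1m β1p (cos φ) + b12 * genAbs β2m β2p (sin φ)))) MeasureTheory.volume u v :=
    fun u v => hcont.intervalIntegrable u v
  -- quadrant 1 : [0, π/2]
  have q1 : (∫ φ in (0:ℝ)..(π/2),
      (cos φ ^ 2 * (a11 * genAbs α1m α1p (cos φ) + a12 * genAbs α2m α2p (sin φ)) +
       sin φ ^ 2 * (b21 * genAbs β3m β3p (cos φ) + b22 * genAbs β4m β4p (sin φ)) +
       sin φ * cos φ * (a21 * genAbs α3m α3p (cos φ) + a22 * genAbs α4m α4p (sin φ) +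
         b11 * genAbs β1m β1p (cos φ) + b12 * genAbs β2m β2p (sin φ))))
      = 2 * (a11 * α1p) / 3 + (a12 * α2p + a21 * α3p + b11 * β1p) / 3
        + (b21 * β3p + a22 * α4p + b12 * β2p) / 3 + 2 * (b22 * β4p) / 3 := by
    have he : Set.EqOn (fun φ : ℝ =>
        (cos φ ^ 2 * (a11 * genAbs α1m α1p (cos φ) + a12 * genAbs α2m α2p (sin φ)) +
         sin φ ^ 2 * (b21 * genAbs β3m β3p (cos φ) + b22 * genAbs β4m β4p (sin φ)) +
         sin φ * cos φ * (a21 * genAbs α3m α3p (cos φ) + a22 * genAbs α4m α4p (sin φ) +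
           b11 * genAbs β1m β1p (cos φ) + b12 * genAbs β2m β2p (sin φ))))
        (fun x : ℝ => (a11 * α1p) * cos x ^ 3 + (a12 * α2p + a21 * α3p + b11 * β1p) * cos x ^ 2 * sin x
          + (b21 * β3p + a22 * α4p + b12 * β2p) * sin x ^ 2 * cos x + (b22 * β4p) * sin x ^ 3)
        (Set.uIcc 0 (π/2)) := by
      intro x hx
      rw [Set.uIcc_of_le (by positivity)] at hx
      have hcos : 0 ≤ cos x := cos_nonneg_of_mem_Icc ⟨by linarith [hx.1], hx.2⟩
      have hsin : 0 ≤ sin x := sin_nonneg_of_nonneg_of_le_pi hx.1 (by linarith [hx.2])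
      simp only [genAbs_of_nonneg _ _ hcos, genAbs_of_nonneg _ _ hsin]
      ring
    rw [intervalIntegral.integral_congr he, key]
    simp [cos_pi_div_two, sin_pi_div_two]
    ring
  -- quadrant 2 : [π/2, π]
  have q2 : (∫ φ in (π/2:ℝ)..π,
      (cos φ ^ 2 * (a11 * genAbs α1m α1p (cos φ) + a12 * genAbs α2m α2p (sin φ)) +
       sin φ ^ 2 * (b21 * genAbs β3m β3p (cos φ) + b22 * genAbs β4m β4p (sin φ)) +
       sin φ * cos φ * (a21 * genAbs α3m α3p (cos φ) + a22 * genAbs α4m α4p (sin φ) +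
         b11 * genAbs β1m β1p (cos φ) + b12 * genAbs β2m β2p (sin φ))))
      = ((a12 * α2p + a21 * α3m + b11 * β1m) / 3 + 2 * (b22 * β4p) / 3)
        - (2 * (a11 * α1m) / 3 + (b21 * β3m + a22 * α4p + b12 * β2p) / 3) := by
    have he : Set.EqOn (fun φ : ℝ =>
        (cos φ ^ 2 * (a11 * genAbs α1m α1p (cos φ) + a12 * genAbs α2m α2p (sin φ)) +
         sin φ ^ 2 * (b21 * genAbs β3m β3p (cos φ) + b22 * genAbs β4m β4p (sin φ)) +
         sin φ * cos φ * (a21 * genAbs α3m α3p (cos φ) + a22 * genAbs α4m α4p (sin φ) +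
           b11 * genAbs β1m β1p (cos φ) + b12 * genAbs β2m β2p (sin φ))))
        (fun x : ℝ => (a11 * α1m) * cos x ^ 3 + (a12 * α2p + a21 * α3m + b11 * β1m) * cos x ^ 2 * sin x
          + (b21 * β3m + a22 * α4p + b12 * β2p) * sin x ^ 2 * cos x + (b22 * β4p) * sin x ^ 3)
        (Set.uIcc (π/2) π) := by
      intro x hx
      rw [Set.uIcc_of_le (by linarith)] at hx
      have hcos : cos x ≤ 0 := cos_nonpos_of_pi_div_two_le_of_le hx.1 (by linarith [hx.2])
      have hsin : 0 ≤ sin x := sin_nonneg_of_nonneg_of_le_pi (by linarith [hx.1]) hx.2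
      simp only [genAbs_of_nonpos _ _ hcos, genAbs_of_nonneg _ _ hsin]
      ring
    rw [intervalIntegral.integral_congr he, key]
    simp [cos_pi_div_two, sin_pi_div_two, cos_pi, sin_pi]
    ring
  -- quadrant 3 : [π, 3π/2]
  have q3 : (∫ φ in (π:ℝ)..(3*π/2),
      (cos φ ^ 2 * (a11 * genAbs α1m α1p (cos φ) + a12 * genAbs α2m α2p (sin φ)) +
       sin φ ^ 2 * (b21 * genAbs β3m β3p (cos φ) + b22 * genAbs β4m β4p (sin φ)) +
       sin φ * cos φ * (a21 * genAbs α3m α3p (cos φ) + a22 * genAbs α4m α4p (sin φ) +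
         b11 * genAbs β1m β1p (cos φ) + b12 * genAbs β2m β2p (sin φ))))
      = (-(2 * (a11 * α1m)) / 3 - (b21 * β3m + a22 * α4m + b12 * β2m) / 3)
        - ((a12 * α2m + a21 * α3m + b11 * β1m) / 3 + 2 * (b22 * β4m) / 3) := by
    have he : Set.EqOn (fun φ : ℝ =>
        (cos φ ^ 2 * (a11 * genAbs α1m α1p (cos φ) + a12 * genAbs α2m α2p (sin φ)) +
         sin φ ^ 2 * (b21 * genAbs β3m β3p (cos φ) + b22 * genAbs β4m β4p (sin φ)) +
         sin φ * cos φ * (a21 * genAbs α3m α3p (cos φ) + a22 * genAbs α4m α4p (sin φ) +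
           b11 * genAbs β1m β1p (cos φ) + b12 * genAbs β2m β2p (sin φ))))
        (fun x : ℝ => (a11 * α1m) * cos x ^ 3 + (a12 * α2m + a21 * α3m + b11 * β1m) * cos x ^ 2 * sin x
          + (b21 * β3m + a22 * α4m + b12 * β2m) * sin x ^ 2 * cos x + (b22 * β4m) * sin x ^ 3)
        (Set.uIcc π (3*π/2)) := by
      intro x hx
      rw [Set.uIcc_of_le (by linarith)] at hx
      have hcos : cos x ≤ 0 := cos_nonpos_of_pi_div_two_le_of_le (by linarith [hx.1]) (by linarith [hx.2])
      have hsin : sin x ≤ 0 := by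
        have h0 : 0 ≤ sin (x - π) :=
          sin_nonneg_of_nonneg_of_le_pi (by linarith [hx.1]) (by linarith [hx.2])
        rw [Real.sin_sub_pi] at h0
        linarith
      simp only [genAbs_of_nonpos _ _ hcos, genAbs_of_nonpos _ _ hsin]
      ring
    rw [intervalIntegral.integral_congr he, key]
    have h32 : (3*π/2 : ℝ) = π + π/2 := by ring
    rw [h32, sin_add, cos_add]
    simp [cos_pi_div_two, sin_pi_div_two, cos_pi, sin_pi]
    ring
  -- quadrant 4 : [3π/2, 2π]
  have q4 : (∫ φ in (3*π/2:ℝ)..(2*π),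
      (cos φ ^ 2 * (a11 * genAbs α1m α1p (cos φ) + a12 * genAbs α2m α2p (sin φ)) +
       sin φ ^ 2 * (b21 * genAbs β3m β3p (cos φ) + b22 * genAbs β4m β4p (sin φ)) +
       sin φ * cos φ * (a21 * genAbs α3m α3p (cos φ) + a22 * genAbs α4m α4p (sin φ) +
         b11 * genAbs β1m β1p (cos φ) + b12 * genAbs β2m β2p (sin φ))))
      = (-((a12 * α2m + a21 * α3p + b11 * β1p)) / 3 - 2 * (b22 * β4m) / 3)
        - (-(2 * (a11 * α1p)) / 3 - (b21 * β3p + a22 * α4m + b12 * β2m) / 3) := by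
    have he : Set.EqOn (fun φ : ℝ =>
        (cos φ ^ 2 * (a11 * genAbs α1m α1p (cos φ) + a12 * genAbs α2m α2p (sin φ)) +
         sin φ ^ 2 * (b21 * genAbs β3m β3p (cos φ) + b22 * genAbs β4m β4p (sin φ)) +
         sin φ * cos φ * (a21 * genAbs α3m α3p (cos φ) + a22 * genAbs α4m α4p (sin φ) +
           b11 * genAbs β1m β1p (cos φ) + b12 * genAbs β2m β2p (sin φ))))
        (fun x : ℝ => (a11 * α1p) * cos x ^ 3 + (a12 * α2m + a21 * α3p + b11 * β1p) * cos x ^ 2 * sin x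
          + (b21 * β3p + a22 * α4m + b12 * β2m) * sin x ^ 2 * cos x + (b22 * β4m) * sin x ^ 3)
        (Set.uIcc (3*π/2) (2*π)) := by
      intro x hx
      rw [Set.uIcc_of_le (by linarith)] at hx
      have hcos : 0 ≤ cos x := by
        rw [← Real.cos_sub_two_pi x]
        exact cos_nonneg_of_mem_Icc ⟨by linarith [hx.1], by linarith [hx.2]⟩
      have hsin : sin x ≤ 0 := by
        have h0 : 0 ≤ sin (x - π) :=
          sin_nonneg_of_nonneg_of_le_pi (by linarith [hx.1]) (by linarith [hx.2])
        rw [Real.sin_sub_pi] at h0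
        linarith
      simp only [genAbs_of_nonneg _ _ hcos, genAbs_of_nonpos _ _ hsin]
      ring
    rw [intervalIntegral.integral_congr he, key]
    have h32 : (3*π/2 : ℝ) = π + π/2 := by ring
    rw [h32, sin_add, cos_add]
    simp [cos_pi_div_two, sin_pi_div_two, cos_pi, sin_pi, sin_two_pi, cos_two_pi]
    ring
  rw [← intervalIntegral.integral_add_adjacent_intervals (hInt 0 π) (hInt π (2*π)),
      ← intervalIntegral.integral_add_adjacent_intervals (hInt 0 (π/2)) (hInt (π/2) π),
      ← intervalIntegral.integral_add_adjacent_intervals (hInt π (3*π/2)) (hInt (3*π/2) (2*π)),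
      q1, q2, q3, q4]
  ring
end

section
/- Let m₁, m₂, m₃, m₄ ∈ ℝ satisfy (m₁ − m₄)² + 4m₂m₃ < 0 and m₃ > 0. Define M(φ) = m₁cos²φ + (m₂ + m₃)sinφ·cosφ + m₄sin²φ and W(φ) = m₃cos²φ + (m₄ − m₁)sinφ·cosφ − m₂sin²φ. Then W(φ) > 0 for all φ, and (1/(2π))·∫₀^{2π} M(φ)/W(φ) dφ = (m₁ + m₄)/√(−4m₂m₃ − (m₁ − m₄)²). -/
/-!
The angular coefficient is `W(φ) = Q(cos φ, sin φ)` for the binary quadratic form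
`Q(x, y) = m₃x² + (m₄ − m₁)xy − m₂y²`, which is positive definite, and on the unit circle
`M = (m₁ + m₄)/2 − W'/2`. Hence `M/W = (m₁ + m₄)/(2W) − (log W)'/2`; the second term integrates
to zero over a period, and for a positive definite form `ax² + bxy + cy²` one has
`∫₀^{2π} dφ / Q(cos φ, sin φ) = 4π / √(4ac − b²)`.
-/

open Real

noncomputable section

def circleQuad (a b c φ : ℝ) : ℝ := a * cos φ ^ 2 + b * sin φ * cos φ + c * sin φ ^ 2

namespace circleQuad

variable {a b c : ℝ}

lemma periodic (a b c : ℝ) : Function.Periodic (circleQuad a b c) (2 * π) := by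
  intro φ
  simp only [circleQuad, sin_add_two_pi, cos_add_two_pi]

@[fun_prop]
lemma continuous (a b c : ℝ) : Continuous (circleQuad a b c) := by
  unfold circleQuad
  fun_prop

lemma hasDerivAt (a b c φ : ℝ) :
    HasDerivAt (circleQuad a b c) (circleQuad b (2 * (c - a)) (-b) φ) φ := by
  have hc := hasDerivAt_cos φ
  have hs := hasDerivAt_sin φ
  have h : HasDerivAt (fun x => a * cos x ^ 2 + b * sin x * cos x + c * sin x ^ 2) _ φ :=
    (((hc.pow 2).const_mul a).add ((hs.const_mul b).mul hc)).add ((hs.pow 2).const_mul c)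
  exact h.congr_deriv (by simp only [circleQuad]; ring)

lemma deriv_sq (a b c φ : ℝ) :
    circleQuad b (2 * (c - a)) (-b) φ ^ 2
      = 4 * (a + c) * circleQuad a b c φ - 4 * circleQuad a b c φ ^ 2 - (4 * a * c - b ^ 2) := by
  simp only [circleQuad]
  linear_combination (4 * (a + c) * (a * cos φ ^ 2 + b * sin φ * cos φ + c * sin φ ^ 2)
    - (4 * a * c - b ^ 2) * (sin φ ^ 2 + cos φ ^ 2 + 1)) * sin_sq_add_cos_sq φ

lemma hasDerivAt_deriv (a b c φ : ℝ) :
    HasDerivAt (circleQuad b (2 * (c - a)) (-b)) (2 * (a + c) - 4 * circleQuad a b c φ) φ :=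
  (hasDerivAt _ _ _ φ).congr_deriv <| by
    simp only [circleQuad]
    linear_combination 2 * (a + c) * sin_sq_add_cos_sq φ

lemma pos (ha : 0 < a) (hdisc : b ^ 2 < 4 * a * c) (φ : ℝ) : 0 < circleQuad a b c φ := by
  have hc : 0 < c := by nlinarith [sq_nonneg b]
  have hcos : 4 * a * circleQuad a b c φ
      = (2 * a * cos φ + b * sin φ) ^ 2 + (4 * a * c - b ^ 2) * sin φ ^ 2 := by
    simp only [circleQuad]; ring
  have hsin : 4 * c * circleQuad a b c φ
      = (2 * c * sin φ + b * cos φ) ^ 2 + (4 * a * c - b ^ 2) * cos φ ^ 2 := by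
    simp only [circleQuad]; ring
  have hsum : 4 * a * c - b ^ 2 ≤ 4 * (a + c) * circleQuad a b c φ := by
    nlinarith [sq_nonneg (2 * a * cos φ + b * sin φ), sq_nonneg (2 * c * sin φ + b * cos φ),
      sin_sq_add_cos_sq φ]
  nlinarith

lemma integral_deriv_div (h : ∀ φ, circleQuad a b c φ ≠ 0) :
    ∫ φ in (0 : ℝ)..2 * π, circleQuad b (2 * (c - a)) (-b) φ / circleQuad a b c φ = 0 := by
  rw [intervalIntegral.integral_eq_sub_of_hasDerivAt (f := fun φ => log (circleQuad a b c φ))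
    (fun φ _ => (hasDerivAt a b c φ).log (h φ))
    (((continuous _ _ _).div (continuous _ _ _) h).intervalIntegrable _ _)]
  simp only [(periodic a b c).eq, sub_self]

/-- An antiderivative of `(circleQuad a b c)⁻¹` on all of `ℝ`; the substitution `t = tan φ`
would only give one on intervals avoiding the zeros of `cos`. -/
def antiderivInv (a b c φ : ℝ) : ℝ :=
  2 / √(4 * a * c - b ^ 2) * (φ + arctan (circleQuad b (2 * (c - a)) (-b) φ /
    (2 * circleQuad a b c φ + √(4 * a * c - b ^ 2))))

lemma hasDerivAt_antiderivInv (ha : 0 < a) (hdisc : b ^ 2 < 4 * a * c) (φ : ℝ) :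
    HasDerivAt (antiderivInv a b c) (circleQuad a b c φ)⁻¹ φ := by
  set d := √(4 * a * c - b ^ 2)
  have hd0 : 0 < d := sqrt_pos.2 (by linarith)
  have hd : d ^ 2 = 4 * a * c - b ^ 2 := sq_sqrt (by linarith)
  have hacd : 0 < a + c + d := by nlinarith [sq_nonneg b]
  have hW := pos ha hdisc φ
  have hV : 0 < 2 * circleQuad a b c φ + d := by linarith
  have hq := ((hasDerivAt_deriv a b c φ).div
    (((hasDerivAt a b c φ).const_mul 2).add_const d) hV.ne').arctan
  refine (((hasDerivAt_id φ).add hq).const_mul (2 / d)).congr_deriv ?_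
  have hU := deriv_sq a b c φ
  simp only [Pi.div_apply]
  generalize circleQuad a b c φ = W at hW hV hU ⊢
  generalize circleQuad b (2 * (c - a)) (-b) φ = U at hU ⊢
  have h1 : 1 + (U / (2 * W + d)) ^ 2 = 4 * W * (a + c + d) / (2 * W + d) ^ 2 := by
    field_simp
    linear_combination hU + hd
  have h2 : (2 * (a + c) - 4 * W) * (2 * W + d) - U * (2 * U)
      = 2 * (a + c + d) * (d - 2 * W) := by
    linear_combination -2 * hU - 2 * hd
  rw [h1, h2]
  field_simp
  ring

lemma integral_inv (ha : 0 < a) (hdisc : b ^ 2 < 4 * a * c) :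
    ∫ φ in (0 : ℝ)..2 * π, (circleQuad a b c φ)⁻¹ = 4 * π / √(4 * a * c - b ^ 2) := by
  rw [intervalIntegral.integral_eq_sub_of_hasDerivAt
    (fun φ _ => hasDerivAt_antiderivInv ha hdisc φ)
    (((continuous a b c).inv₀ fun φ => (pos ha hdisc φ).ne').intervalIntegrable _ _)]
  simp only [antiderivInv, (periodic a b c).eq, (periodic b (2 * (c - a)) (-b)).eq]
  ring

end circleQuad

end

/-- If the matrix `[[m₁,m₂],[m₃,m₄]]` has non-real complex conjugate eigenvalues
(`(m₁−m₄)² + 4m₂m₃ < 0`) and `m₃ > 0`, then the angular coefficient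
`W(φ) = m₃cos²φ + (m₄−m₁)sinφcosφ − m₂sin²φ` is positive for all `φ`, and the average of
`M(φ)/W(φ)` with `M(φ) = m₁cos²φ + (m₂+m₃)sinφcosφ + m₄sin²φ` over one period equals
`(m₁+m₄)/√(−4m₂m₃ − (m₁−m₄)²)`. -/
theorem stmt16 (m1 m2 m3 m4 : ℝ)
    (hdisc : (m1 - m4) ^ 2 + 4 * m2 * m3 < 0) (hm3 : 0 < m3) :
    (∀ φ : ℝ, 0 < m3 * cos φ ^ 2 + (m4 - m1) * sin φ * cos φ - m2 * sin φ ^ 2) ∧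
    (1 / (2 * π)) * (∫ φ in (0:ℝ)..(2 * π),
        (m1 * cos φ ^ 2 + (m2 + m3) * sin φ * cos φ + m4 * sin φ ^ 2) /
        (m3 * cos φ ^ 2 + (m4 - m1) * sin φ * cos φ - m2 * sin φ ^ 2))
      = (m1 + m4) / Real.sqrt (-4 * m2 * m3 - (m1 - m4) ^ 2) := by
  set W := circleQuad m3 (m4 - m1) (-m2)
  set W' := circleQuad (m4 - m1) (2 * (-m2 - m3)) (-(m4 - m1))
  have hdisc' : (m4 - m1) ^ 2 < 4 * m3 * -m2 := by linarith
  have hpos := circleQuad.pos hm3 hdisc'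
  have hW (φ : ℝ) : m3 * cos φ ^ 2 + (m4 - m1) * sin φ * cos φ - m2 * sin φ ^ 2 = W φ := by
    simp only [W, circleQuad]; ring
  have hM (φ : ℝ) : m1 * cos φ ^ 2 + (m2 + m3) * sin φ * cos φ + m4 * sin φ ^ 2
      = (m1 + m4) / 2 - W' φ / 2 := by
    simp only [W', circleQuad]
    linear_combination (m1 + m4) / 2 * sin_sq_add_cos_sq φ
  have hsplit : (fun φ => ((m1 + m4) / 2 - W' φ / 2) / W φ)
      = fun φ => (m1 + m4) / 2 * (W φ)⁻¹ - 1 / 2 * (W' φ / W φ) := by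
    ext φ
    ring
  simp only [hW, hM, hsplit]
  refine ⟨hpos, ?_⟩
  rw [intervalIntegral.integral_sub, intervalIntegral.integral_const_mul,
    intervalIntegral.integral_const_mul, circleQuad.integral_inv hm3 hdisc',
    circleQuad.integral_deriv_div fun φ => (hpos φ).ne']
  · rw [show 4 * m3 * -m2 - (m4 - m1) ^ 2 = -4 * m2 * m3 - (m1 - m4) ^ 2 by ring]
    field_simp
    ring
  all_goals apply Continuous.intervalIntegrable
  all_goals fun_prop (disch := exact fun φ => (hpos φ).ne')
end

section
/- Let C, D be nonzero reals, φ₀, ϑ ∈ ℝ with sin(ϑ − φ₀) ≠ 0, and let a_{ij}, b_{ij} (1 ≤ i,j ≤ 2) be reals. Define χ₂ : ℝ → ℝ by χ₂(φ) = (1/(C·D·sin(ϑ − φ₀)))·[ C|C|·cos(φ−φ₀)|cos(φ−φ₀)|·(a₁₁·D·sin(ϑ−φ) + b₁₁·C·sin(φ−φ₀)) + C|D|·cos(φ−φ₀)|cos(φ−ϑ)|·(a₁₂·D·sin(ϑ−φ) + b₁₂·C·sin(φ−φ₀)) + |C|D·cos(φ−ϑ)|cos(φ−φ₀)|·(a₂₁·D·sin(ϑ−φ)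 + b₂₁·C·sin(φ−φ₀)) + D|D|·cos(φ−ϑ)|cos(φ−ϑ)|·(a₂₂·D·sin(ϑ−φ) + b₂₂·C·sin(φ−φ₀)) ]. Then ∫₀^{2π} χ₂(φ) dφ = (4/3)·[ 2|C|a₁₁ + |D|a₁₂ + |C|b₂₁ + 2|D|b₂₂ + cos(ϑ − φ₀)·(sgn(C)·D·a₂₁ + sgn(D)·C·b₁₂) ]. -/
/-!
Each of the eight terms of `χ₂` is a constant multiple of `cos (φ - α) * |cos (φ - θ)| * sin (φ - β)`.
This integrand is `π`-periodic, so its integral over `[0, 2π]` is twice its integral over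
`[θ - π/2, θ + π/2]`, where `|cos (φ - θ)| = cos (φ - θ)`; there it is a trigonometric polynomial,
with integral `8/3 cos (θ - α) sin (θ - β) - 4/3 sin (θ - α) cos (θ - β)`. Summing the eight
contributions, the factor `1 / (C D sin (ϑ - φ₀))` cancels.
-/

open Real

theorem integral_cos_add_mul_cos_mul_sin_add (u v : ℝ) :
    ∫ ψ in -(π / 2)..π / 2, cos (ψ + u) * cos ψ * sin (ψ + v)
      = 4 / 3 * cos u * sin v - 2 / 3 * sin u * cos v := by
  have expand : ∀ ψ, cos (ψ + u) * cos ψ * sin (ψ + v)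
      = cos u * sin v * cos ψ ^ 3
        + (cos u * cos v - sin u * sin v) * (sin ψ * cos ψ ^ 2)
        - sin u * cos v * (sin ψ ^ 2 * cos ψ) := fun ψ => by
    rw [cos_add, sin_add]
    ring
  simp_rw [expand]
  rw [intervalIntegral.integral_sub (by apply Continuous.intervalIntegrable; fun_prop)
      (by apply Continuous.intervalIntegrable; fun_prop),
    intervalIntegral.integral_add (by apply Continuous.intervalIntegrable; fun_prop)
      (by apply Continuous.intervalIntegrable; fun_prop)]
  simp only [intervalIntegral.integral_const_mul, integral_cos_pow_three, integral_sin_mul_cos_sq,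
    integral_sin_sq_mul_cos, sin_neg, cos_neg, sin_pi_div_two, cos_pi_div_two]
  ring

theorem periodic_cos_mul_abs_cos_mul_sin (α θ β : ℝ) :
    Function.Periodic (fun φ => cos (φ - α) * |cos (φ - θ)| * sin (φ - β)) π := fun φ => by
  simp only [add_sub_right_comm φ π, cos_add_pi, sin_add_pi, abs_neg]
  ring

theorem integral_cos_mul_abs_cos_mul_sin (α θ β : ℝ) :
    ∫ φ in (0 : ℝ)..2 * π, cos (φ - α) * |cos (φ - θ)| * sin (φ - β)
      = 8 / 3 * cos (θ - α) * sin (θ - β) - 4 / 3 * sin (θ - α) * cos (θ - β) := by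
  set F := fun φ => cos (φ - α) * |cos (φ - θ)| * sin (φ - β)
  have hper : Function.Periodic F π := periodic_cos_mul_abs_cos_mul_sin α θ β
  have two_periods : ∫ φ in (0 : ℝ)..2 * π, F φ = 2 * ∫ φ in θ - π / 2..θ - π / 2 + π, F φ := by
    have := hper.intervalIntegral_add_zsmul_eq 2 0
      fun _ _ => (by fun_prop : Continuous F).intervalIntegrable _ _
    rwa [zero_add, two_zsmul, ← two_mul, hper.intervalIntegral_add_eq 0 (θ - π / 2),
      zsmul_eq_mul, Int.cast_ofNat] at this
  have centred : ∫ φ in θ - π / 2..θ - π / 2 + π, F φ = ∫ ψ in -(π / 2)..π / 2, F (ψ + θ) := by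
    rw [intervalIntegral.integral_comp_add_right]
    congr 1 <;> ring
  have abs_cos_eq : ∫ ψ in -(π / 2)..π / 2, F (ψ + θ)
      = ∫ ψ in -(π / 2)..π / 2, cos (ψ + (θ - α)) * cos ψ * sin (ψ + (θ - β)) := by
    refine intervalIntegral.integral_congr fun ψ hψ => ?_
    rw [Set.uIcc_of_le (by linarith [pi_pos])] at hψ
    simp only [F, add_sub_cancel_right, abs_of_nonneg (cos_nonneg_of_mem_Icc hψ)]
    ring_nf
  rw [two_periods, centred, abs_cos_eq, integral_cos_add_mul_cos_mul_sin_add]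
  ring

theorem integral_mul_cos_mul_abs_cos_mul_sin_linear_combination (k α θ p γ q β : ℝ) :
    ∫ φ in (0 : ℝ)..2 * π,
        k * (cos (φ - α) * |cos (φ - θ)|) * (p * sin (γ - φ) + q * sin (φ - β))
      = k * (q * (8 / 3 * cos (θ - α) * sin (θ - β) - 4 / 3 * sin (θ - α) * cos (θ - β))
          - p * (8 / 3 * cos (θ - α) * sin (θ - γ) - 4 / 3 * sin (θ - α) * cos (θ - γ))) := by
  have split : ∀ φ, k * (cos (φ - α) * |cos (φ - θ)|) * (p * sin (γ - φ) + q * sin (φ - β))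
      = k * q * (cos (φ - α) * |cos (φ - θ)| * sin (φ - β))
        - k * p * (cos (φ - α) * |cos (φ - θ)| * sin (φ - γ)) := fun φ => by
    rw [← neg_sub φ γ, sin_neg]
    ring
  simp_rw [split]
  rw [intervalIntegral.integral_sub (by apply Continuous.intervalIntegrable; fun_prop)
      (by apply Continuous.intervalIntegrable; fun_prop)]
  simp only [intervalIntegral.integral_const_mul, integral_cos_mul_abs_cos_mul_sin]
  ring

theorem Real.abs_eq_sign_mul (r : ℝ) : |r| = Real.sign r * r := by
  rcases lt_trichotomy r 0 with hr | rfl | hr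
  · rw [abs_of_neg hr, Real.sign_of_neg hr]
    ring
  · simp
  · rw [abs_of_pos hr, Real.sign_of_pos hr]
    ring

/-- The angular average, over one period, of the quadratic radial coefficient
`χ₂` of a planar system with general linear part transformed to normal form by the matrix
with rows `(C cos φ₀, C sin φ₀)` and `(D cos ϑ, D sin ϑ)` equals
`(4/3)·[2|C|a₁₁ + |D|a₁₂ + |C|b₂₁ + 2|D|b₂₂ + cos(ϑ−φ₀)(sgn(C)Da₂₁ + sgn(D)Cb₁₂)]`. -/
theorem stmt18 (C D φ₀ ϑ : ℝ) (hC : C ≠ 0) (hD : D ≠ 0)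
    (hdet : Real.sin (ϑ - φ₀) ≠ 0)
    (a11 a12 a21 a22 b11 b12 b21 b22 : ℝ) :
    (∫ φ in (0:ℝ)..(2 * π),
      (1 / (C * D * sin (ϑ - φ₀))) *
        (C * |C| * (cos (φ - φ₀) * |cos (φ - φ₀)|) *
            (a11 * D * sin (ϑ - φ) + b11 * C * sin (φ - φ₀)) +
         C * |D| * (cos (φ - φ₀) * |cos (φ - ϑ)|) *
            (a12 * D * sin (ϑ - φ) + b12 * C * sin (φ - φ₀)) +
         |C| * D * (cos (φ - ϑ) * |cos (φ - φ₀)|) *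
            (a21 * D * sin (ϑ - φ) + b21 * C * sin (φ - φ₀)) +
         D * |D| * (cos (φ - ϑ) * |cos (φ - ϑ)|) *
            (a22 * D * sin (ϑ - φ) + b22 * C * sin (φ - φ₀))))
    = 4 / 3 * (2 * |C| * a11 + |D| * a12 + |C| * b21 + 2 * |D| * b22 +
        cos (ϑ - φ₀) * (Real.sign C * D * a21 + Real.sign D * C * b12)) := by
  rw [intervalIntegral.integral_const_mul]
  simp (disch := apply Continuous.intervalIntegrable; fun_prop) only
    [intervalIntegral.integral_add, integral_mul_cos_mul_abs_cos_mul_sin_linear_combination]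
  rw [← neg_sub ϑ φ₀, sin_neg, cos_neg, Real.abs_eq_sign_mul C, Real.abs_eq_sign_mul D]
  simp only [sub_self, sin_zero, cos_zero]
  field_simp
  ring
end

section
/- For all real constants c₅, h₁₁, h₁₂, h₂₁, h₂₂, define Υ : ℝ → ℝ by Υ(s) = c₅·cos s·sin s + h₁₁·cos s·|cos s| + h₁₂·cos s·|sin s| + h₂₁·sin s·|cos s| + h₂₂·sin s·|sin s|. Then ∫₀^{2π} Υ(s) ds = 0 and ∫₀^{2π} s·Υ(s) ds = −(π/2)·(c₅ + 2h₂₁ + π·h₂₂). -/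
/-!
On each quarter period `[kπ/2, (k+1)π/2]` the functions `cos` and `sin` have constant signs, so
there `Υ` is a fixed combination `α cos s sin s + β cos² s + γ sin² s` whose primitive and first
moment are elementary. Summing the four quarters, the contributions of `h₁₁` and `h₁₂` cancel.
-/

open Real Set intervalIntegral

noncomputable section

def upsilon (c5 h11 h12 h21 h22 s : ℝ) : ℝ :=
  c5 * cos s * sin s + h11 * cos s * |cos s| + h12 * cos s * |sin s| +
    h21 * sin s * |cos s| + h22 * sin s * |sin s|

def trigQuad (α β γ s : ℝ) : ℝ :=
  α * cos s * sin s + β * cos s ^ 2 + γ * sin s ^ 2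

def trigQuadPrimitive (α β γ s : ℝ) : ℝ :=
  α * sin s ^ 2 / 2 + β * (s + sin s * cos s) / 2 + γ * (s - sin s * cos s) / 2

def trigQuadMomentPrimitive (α β γ s : ℝ) : ℝ :=
  α * (s * sin s ^ 2 / 2 - s / 4 + sin s * cos s / 4) +
    β * (s ^ 2 / 4 + s * sin s * cos s / 2 - sin s ^ 2 / 4) +
    γ * (s ^ 2 / 4 - s * sin s * cos s / 2 + sin s ^ 2 / 4)

end

section Primitives

variable (α β γ : ℝ)

@[fun_prop]
theorem continuous_trigQuad : Continuous (trigQuad α β γ) := by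
  unfold trigQuad; fun_prop

theorem hasDerivAt_trigQuadPrimitive (x : ℝ) :
    HasDerivAt (trigQuadPrimitive α β γ) (trigQuad α β γ x) x := by
  have h := ((((hasDerivAt_sin x).pow 2).const_mul α).div_const 2).add
    ((((hasDerivAt_id x).add ((hasDerivAt_sin x).mul (hasDerivAt_cos x))).const_mul β).div_const 2)
    |>.add ((((hasDerivAt_id x).sub
      ((hasDerivAt_sin x).mul (hasDerivAt_cos x))).const_mul γ).div_const 2)
  refine h.congr_deriv ?_
  simp only [trigQuad, Nat.cast_ofNat]
  linear_combination -(β + γ) / 2 * sin_sq_add_cos_sq x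

theorem hasDerivAt_trigQuadMomentPrimitive (x : ℝ) :
    HasDerivAt (trigQuadMomentPrimitive α β γ) (x * trigQuad α β γ x) x := by
  have hsc := (hasDerivAt_sin x).mul (hasDerivAt_cos x)
  have hxsc := ((hasDerivAt_id x).mul (hasDerivAt_sin x)).mul (hasDerivAt_cos x)
  have hs2 := (hasDerivAt_sin x).pow 2
  have h := ((((((hasDerivAt_id x).mul hs2).div_const 2).sub ((hasDerivAt_id x).div_const 4)).add
      (hsc.div_const 4)).const_mul α).add
    (((((hasDerivAt_pow 2 x).div_const 4).add (hxsc.div_const 2)).sub (hs2.div_const 4)).const_mul β)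
    |>.add (((((hasDerivAt_pow 2 x).div_const 4).sub (hxsc.div_const 2)).add
      (hs2.div_const 4)).const_mul γ)
  refine h.congr_deriv ?_
  simp only [trigQuad, Pi.mul_apply, Pi.pow_apply, id, Nat.cast_ofNat]
  linear_combination (α / 4 - (β + γ) * x / 2) * sin_sq_add_cos_sq x

end Primitives

theorem abs_cos_of_mem_Icc_zero_pi_div_two {s : ℝ} (hs : s ∈ Icc 0 (π / 2)) :
    |cos s| = 1 * cos s := by
  rw [one_mul, abs_of_nonneg (cos_nonneg_of_neg_pi_div_two_le_of_le (by linarith [hs.1, pi_pos])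
    hs.2)]

theorem abs_cos_of_mem_Icc_pi_div_two {s : ℝ} (hs : s ∈ Icc (π / 2) (π + π / 2)) :
    |cos s| = -1 * cos s := by
  rw [neg_one_mul, abs_of_nonpos (cos_nonpos_of_pi_div_two_le_of_le hs.1 hs.2)]

theorem abs_cos_of_mem_Icc_three_pi_div_two {s : ℝ} (hs : s ∈ Icc (π + π / 2) (2 * π)) :
    |cos s| = 1 * cos s := by
  rw [one_mul, ← cos_sub_two_pi, abs_of_nonneg (cos_nonneg_of_neg_pi_div_two_le_of_le
    (by linarith [hs.1]) (by linarith [hs.2, pi_pos]))]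

theorem abs_sin_of_mem_Icc_zero_pi {s : ℝ} (hs : s ∈ Icc 0 π) : |sin s| = 1 * sin s := by
  rw [one_mul, abs_of_nonneg (sin_nonneg_of_nonneg_of_le_pi hs.1 hs.2)]

theorem abs_sin_of_mem_Icc_pi_two_pi {s : ℝ} (hs : s ∈ Icc π (2 * π)) :
    |sin s| = -1 * sin s := by
  rw [neg_one_mul, ← sin_sub_two_pi, abs_of_nonpos (sin_nonpos_of_nonpos_of_neg_pi_le
    (by linarith [hs.2]) (by linarith [hs.1]))]

theorem integral_eq_trigQuadPrimitive_of_eqOn {g : ℝ → ℝ} {a b α β γ : ℝ}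
    (hg : EqOn g (trigQuad α β γ) (uIcc a b)) :
    ∫ s in a..b, g s = trigQuadPrimitive α β γ b - trigQuadPrimitive α β γ a := by
  rw [integral_congr hg]
  exact integral_eq_sub_of_hasDerivAt (fun x _ => hasDerivAt_trigQuadPrimitive α β γ x)
    ((continuous_trigQuad α β γ).intervalIntegrable a b)

theorem integral_mul_eq_trigQuadMomentPrimitive_of_eqOn {g : ℝ → ℝ} {a b α β γ : ℝ}
    (hg : EqOn g (trigQuad α β γ) (uIcc a b)) :
    ∫ s in a..b, s * g s = trigQuadMomentPrimitive α β γ b - trigQuadMomentPrimitive α β γ a := by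
  rw [integral_congr (fun s hs => congrArg (s * ·) (hg hs))]
  exact integral_eq_sub_of_hasDerivAt (fun x _ => hasDerivAt_trigQuadMomentPrimitive α β γ x)
    (by apply Continuous.intervalIntegrable; fun_prop)

theorem integral_zero_two_pi_eq_sum_quarters {f : ℝ → ℝ} (hf : Continuous f) :
    ∫ s in (0 : ℝ)..2 * π, f s = (∫ s in (0 : ℝ)..π / 2, f s) + (∫ s in π / 2..π, f s) +
      (∫ s in π..π + π / 2, f s) + ∫ s in π + π / 2..2 * π, f s := by
  rw [integral_add_adjacent_intervals, integral_add_adjacent_intervals,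
    integral_add_adjacent_intervals] <;> exact hf.intervalIntegrable _ _

section Upsilon

variable (c5 h11 h12 h21 h22 : ℝ)

@[fun_prop]
theorem continuous_upsilon : Continuous (upsilon c5 h11 h12 h21 h22) := by
  unfold upsilon; fun_prop

theorem eqOn_upsilon_trigQuad {a b σc σs : ℝ} (hab : a ≤ b)
    (hcos : ∀ s ∈ Icc a b, |cos s| = σc * cos s) (hsin : ∀ s ∈ Icc a b, |sin s| = σs * sin s) :
    EqOn (upsilon c5 h11 h12 h21 h22)
      (trigQuad (c5 + σs * h12 + σc * h21) (σc * h11) (σs * h22)) (uIcc a b) := by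
  intro s hs
  rw [uIcc_of_le hab] at hs
  rw [upsilon, trigQuad, hcos s hs, hsin s hs]
  ring

end Upsilon

/-- For the coefficient function
`Υ(s) = c₅cos s sin s + h₁₁cos s|cos s| + h₁₂cos s|sin s| + h₂₁sin s|cos s| + h₂₂sin s|sin s|`
one has `∫₀^{2π} Υ(s) ds = 0` and `∫₀^{2π} s·Υ(s) ds = −(π/2)(c₅ + 2h₂₁ + πh₂₂)`. -/
theorem stmt19 (c5 h11 h12 h21 h22 : ℝ) :
    (∫ s in (0:ℝ)..(2 * π),
        (c5 * cos s * sin s + h11 * cos s * |cos s| + h12 * cos s * |sin s| +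
         h21 * sin s * |cos s| + h22 * sin s * |sin s|)) = 0 ∧
    (∫ s in (0:ℝ)..(2 * π),
        s * (c5 * cos s * sin s + h11 * cos s * |cos s| + h12 * cos s * |sin s| +
         h21 * sin s * |cos s| + h22 * sin s * |sin s|))
      = -(π / 2) * (c5 + 2 * h21 + π * h22) := by
  have hπ := pi_pos
  have q₁ := eqOn_upsilon_trigQuad c5 h11 h12 h21 h22 (by linarith)
    (fun s hs => abs_cos_of_mem_Icc_zero_pi_div_two hs)
    (fun s hs => abs_sin_of_mem_Icc_zero_pi (Icc_subset_Icc le_rfl (by linarith) hs))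
  have q₂ := eqOn_upsilon_trigQuad c5 h11 h12 h21 h22 (by linarith)
    (fun s hs => abs_cos_of_mem_Icc_pi_div_two (Icc_subset_Icc le_rfl (by linarith) hs))
    (fun s hs => abs_sin_of_mem_Icc_zero_pi (Icc_subset_Icc (by linarith) le_rfl hs))
  have q₃ := eqOn_upsilon_trigQuad c5 h11 h12 h21 h22 (by linarith)
    (fun s hs => abs_cos_of_mem_Icc_pi_div_two (Icc_subset_Icc (by linarith) le_rfl hs))
    (fun s hs => abs_sin_of_mem_Icc_pi_two_pi (Icc_subset_Icc le_rfl (by linarith) hs))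
  have q₄ := eqOn_upsilon_trigQuad c5 h11 h12 h21 h22 (by linarith)
    (fun s hs => abs_cos_of_mem_Icc_three_pi_div_two hs)
    (fun s hs => abs_sin_of_mem_Icc_pi_two_pi (Icc_subset_Icc (by linarith) le_rfl hs))
  change (∫ s in (0:ℝ)..2 * π, upsilon c5 h11 h12 h21 h22 s) = 0 ∧
    (∫ s in (0:ℝ)..2 * π, s * upsilon c5 h11 h12 h21 h22 s) = _
  rw [integral_zero_two_pi_eq_sum_quarters (by fun_prop),
    integral_zero_two_pi_eq_sum_quarters (by fun_prop)]
  simp only [integral_eq_trigQuadPrimitive_of_eqOn q₁, integral_eq_trigQuadPrimitive_of_eqOn q₂,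
    integral_eq_trigQuadPrimitive_of_eqOn q₃, integral_eq_trigQuadPrimitive_of_eqOn q₄,
    integral_mul_eq_trigQuadMomentPrimitive_of_eqOn q₁,
    integral_mul_eq_trigQuadMomentPrimitive_of_eqOn q₂,
    integral_mul_eq_trigQuadMomentPrimitive_of_eqOn q₃,
    integral_mul_eq_trigQuadMomentPrimitive_of_eqOn q₄,
    trigQuadPrimitive, trigQuadMomentPrimitive, sin_add_pi_div_two, cos_add_pi_div_two,
    sin_zero, cos_zero, sin_pi_div_two, cos_pi_div_two, sin_pi, cos_pi, sin_two_pi, cos_two_pi]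
  constructor <;> ring
end
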